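/- arXiv:2402.08321 — 2 statements merged into one kernel-verified Lean document; each statement's English description precedes it below -/
import Mathlib

section
/- Fix x ∈ (0,1) and let φ(y) = -log y be the log-barrier function on (0,∞). Then for any a > -1/x, sup over y > 0 of [a(x - y) - D_φ(y,x)] equals ax - log(1 + ax). In particular, if a ≥ -1/(2x) this supremum is at most x²·a². -/
/-!
Put `b = a + 1/x > 0`. Since `1 + a x = b x`, the objective rewrites as
`a(x - y) - D_φ(y, x) = a x - log(1 + a x) - (b y - 1 - log (b y))`, and `u - 1 - log u ≥ 0`
with equality exactly at `u = 1`; so the supremum is attained at `y = 1/b`.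
For the bound, `t = a x ≥ -1/2` and `t - log(1 + t) ≤ t²` comes from `(1 + t) e^{t² - t} ≥ 1`.
-/

open Real Set

/-- Bregman divergence induced by the log-barrier `φ(y) = -log y`,
with `φ'(x) = -1/x`. -/
noncomputable def DphiLB (y x : ℝ) : ℝ :=
  -Real.log y - (-Real.log x) - (-(1 / x)) * (y - x)

lemma sub_DphiLB_eq {x y a : ℝ} (hx : 0 < x) (hy : 0 < y) (hb : 0 < a + 1 / x) :
    a * (x - y) - DphiLB y x =
      a * x - log (1 + a * x) - ((a + 1 / x) * y - 1 - log ((a + 1 / x) * y)) := by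
  have hbx : 1 + a * x = (a + 1 / x) * x := by field_simp; ring
  rw [hbx, log_mul hb.ne' hx.ne', log_mul hb.ne' hy.ne', DphiLB]
  field_simp
  ring

lemma isGreatest_sub_DphiLB {x a : ℝ} (hx : 0 < x) (ha : -(1 / x) < a) :
    IsGreatest ((fun y : ℝ => a * (x - y) - DphiLB y x) '' Ioi 0)
      (a * x - log (1 + a * x)) := by
  have hb : 0 < a + 1 / x := by linarith
  refine ⟨⟨(a + 1 / x)⁻¹, inv_pos.mpr hb, ?_⟩, ?_⟩
  · simp only [sub_DphiLB_eq hx (inv_pos.mpr hb) hb, mul_inv_cancel₀ hb.ne', log_one]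
    ring
  · rintro _ ⟨y, hy, rfl⟩
    have hy : 0 < y := hy
    have := log_le_sub_one_of_pos (mul_pos hb hy)
    simp only [sub_DphiLB_eq hx hy hb]
    linarith

lemma one_le_one_add_mul_exp_sq_sub {t : ℝ} (ht : -(1 / 2) ≤ t) :
    1 ≤ (1 + t) * exp (t ^ 2 - t) := by
  -- For `t ≥ 0`, `(1 + t)(1 + t² - t) = 1 + t³` suffices; for `t < 0` the quadratic
  -- Taylor bound of `exp` is needed, and `t ≥ -1/2` keeps it above `1`.
  rcases le_or_gt 0 t with ht0 | ht0
  · have := add_one_le_exp (t ^ 2 - t)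
    nlinarith [pow_nonneg ht0 3]
  · have := quadratic_le_exp_of_nonneg (x := t ^ 2 - t) (by nlinarith)
    nlinarith

lemma sub_log_one_add_le_sq {t : ℝ} (ht : -(1 / 2) ≤ t) : t - log (1 + t) ≤ t ^ 2 := by
  have h1t : 0 < 1 + t := by linarith
  have := log_nonneg (one_le_one_add_mul_exp_sq_sub ht)
  rw [log_mul h1t.ne' (exp_pos _).ne', log_exp] at this
  linarith

theorem stab_log_barrier (x : ℝ) (hx : x ∈ Set.Ioo (0:ℝ) 1) (a : ℝ) (ha : -(1 / x) < a) :
    IsLUB ((fun y : ℝ => a * (x - y) - DphiLB y x) '' Set.Ioi 0)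
      (a * x - Real.log (1 + a * x)) ∧
    (-(1 / (2 * x)) ≤ a → a * x - Real.log (1 + a * x) ≤ x ^ 2 * a ^ 2) := by
  refine ⟨(isGreatest_sub_DphiLB hx.1 ha).isLUB, fun ha₂ => ?_⟩
  have ht : -(1 / 2) ≤ a * x := by
    have := mul_le_mul_of_nonneg_right ha₂ hx.1.le
    rwa [show -(1 / (2 * x)) * x = -(1 / 2) by field_simp [hx.1.ne']] at this
  calc a * x - log (1 + a * x) ≤ (a * x) ^ 2 := sub_log_one_add_le_sq ht
    _ = x ^ 2 * a ^ 2 := by ring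
end

section
/- Fix x ∈ (0,1) and let φ(y) = -log(1-y) be the complement log-barrier function on (-∞,1). Then for any a < 1/(1-x), sup over y ∈ (-∞,1) of [a(x - y) - D_φ(y,x)] equals -a(1-x) - log(1 - a(1-x)). In particular, if a ≤ 1/(2(1-x)) this supremum is at most (1-x)²·a². -/
/-- Bregman divergence induced by the complement log-barrier `φ(y) = -log(1-y)`,
with `φ'(x) = 1/(1-x)`. -/
noncomputable def DphiCLB (y x : ℝ) : ℝ :=
  -Real.log (1 - y) - (-Real.log (1 - x)) - (1 / (1 - x)) * (y - x)

/-!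
With `t = (1 - y) / (1 - x)` and `k = 1 - a (1 - x) > 0` the objective becomes
`log t - k t + k`, and `log t - k t ≤ -log k - 1` is `log (k t) ≤ k t - 1`, with equality at
`t = 1 / k`. For the quadratic bound on `-u - log (1 - u)`, `u = a (1 - x) ≤ 1/2`, use
`log (1 - u)⁻¹ ≤ u / (1 - u)` when `u ≤ 0` and `(1 - u)⁻¹ ≤ exp (u + u²)` when `0 ≤ u`.
-/

open Real Set

lemma log_sub_mul_le {k t : ℝ} (hk : 0 < k) (ht : 0 < t) :
    log t - k * t ≤ -log k - 1 := by
  have := log_le_sub_one_of_pos (mul_pos hk ht)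
  rw [log_mul hk.ne' ht.ne'] at this
  linarith

lemma sub_DphiCLB_eq {x y : ℝ} (hx : x ≠ 1) (hy : y ≠ 1) (a : ℝ) :
    a * (x - y) - DphiCLB y x =
      log ((1 - y) / (1 - x)) - (1 - a * (1 - x)) * ((1 - y) / (1 - x)) + (1 - a * (1 - x)) := by
  have hx' : 1 - x ≠ 0 := sub_ne_zero.mpr hx.symm
  rw [DphiCLB, log_div (sub_ne_zero.mpr hy.symm) hx']
  field_simp
  ring

lemma isGreatest_sub_DphiCLB {x a : ℝ} (hx : x < 1) (ha : a * (1 - x) < 1) :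
    IsGreatest ((fun y => a * (x - y) - DphiCLB y x) '' Iio 1)
      (-(a * (1 - x)) - log (1 - a * (1 - x))) := by
  have hc : 0 < 1 - x := by linarith
  have hk : 0 < 1 - a * (1 - x) := by linarith
  constructor
  · have hy : 1 - (1 - x) / (1 - a * (1 - x)) < 1 := by
      have := div_pos hc hk
      linarith
    refine ⟨_, hy, ?_⟩
    have ht : (1 - (1 - (1 - x) / (1 - a * (1 - x)))) / (1 - x) = (1 - a * (1 - x))⁻¹ := by
      field_simp
      ring
    simp only
    rw [sub_DphiCLB_eq hx.ne hy.ne, ht, log_inv, mul_inv_cancel₀ hk.ne']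
    ring
  · rintro _ ⟨y, hy, rfl⟩
    rw [mem_Iio] at hy
    have ht : 0 < (1 - y) / (1 - x) := div_pos (by linarith) hc
    simp only
    rw [sub_DphiCLB_eq hx.ne hy.ne]
    linarith [log_sub_mul_le hk ht]

lemma neg_sub_log_one_sub_le_sq_of_nonpos {u : ℝ} (hu : u ≤ 0) :
    -u - log (1 - u) ≤ u ^ 2 := by
  have hk : 0 < 1 - u := by linarith
  have hlog := log_le_sub_one_of_pos (inv_pos.mpr hk)
  rw [log_inv, inv_eq_one_div, div_sub_one hk.ne'] at hlog
  have : (1 - (1 - u)) / (1 - u) ≤ u ^ 2 + u := by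
    rw [div_le_iff₀ hk]
    nlinarith [mul_nonpos_of_nonpos_of_nonneg hu (sq_nonneg u)]
  linarith

lemma neg_sub_log_one_sub_le_sq_of_nonneg {u : ℝ} (hu₀ : 0 ≤ u) (hu : u ≤ 1 / 2) :
    -u - log (1 - u) ≤ u ^ 2 := by
  have hk : 0 < 1 - u := by linarith
  -- `(1 - u)⁻¹ ≤ 1 + v + v² / 2 ≤ exp v` for `v = u + u²`
  have hinv : (1 - u)⁻¹ ≤ exp (u + u ^ 2) := by
    refine le_trans ?_ (quadratic_le_exp_of_nonneg (by positivity))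
    rw [inv_eq_one_div, div_le_iff₀ hk]
    nlinarith
  have := log_le_log (inv_pos.mpr hk) hinv
  rw [log_inv, log_exp] at this
  linarith

lemma neg_sub_log_one_sub_le_sq {u : ℝ} (hu : u ≤ 1 / 2) : -u - log (1 - u) ≤ u ^ 2 := by
  rcases le_total u 0 with hu₀ | hu₀
  · exact neg_sub_log_one_sub_le_sq_of_nonpos hu₀
  · exact neg_sub_log_one_sub_le_sq_of_nonneg hu₀ hu

theorem stab_complement_log_barrier (x : ℝ) (hx : x ∈ Set.Ioo (0:ℝ) 1) (a : ℝ)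
    (ha : a < 1 / (1 - x)) :
    IsLUB ((fun y : ℝ => a * (x - y) - DphiCLB y x) '' Set.Iio 1)
      (-(a * (1 - x)) - Real.log (1 - a * (1 - x))) ∧
    (a ≤ 1 / (2 * (1 - x)) →
      -(a * (1 - x)) - Real.log (1 - a * (1 - x)) ≤ (1 - x) ^ 2 * a ^ 2) := by
  have hc : 0 < 1 - x := sub_pos.mpr hx.2
  refine ⟨(isGreatest_sub_DphiCLB hx.2 ?_).isLUB, fun ha' => ?_⟩
  · exact (lt_div_iff₀ hc).mp ha
  · have hu : a * (1 - x) ≤ 1 / 2 := by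
      rw [le_div_iff₀ (by positivity)] at ha'
      linarith
    calc -(a * (1 - x)) - log (1 - a * (1 - x)) ≤ (a * (1 - x)) ^ 2 := neg_sub_log_one_sub_le_sq hu
      _ = (1 - x) ^ 2 * a ^ 2 := by ring
end
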